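/- arXiv:2405.10027 — 5 statements merged into one kernel-verified Lean document; each statement's English description precedes it below -/
import Mathlib

section
/- Let W be a nonempty convex subset of ℝ^N, let R : ℝ^N → ℝ be convex and differentiable on an open set containing W, and let g_1, …, g_T ∈ ℝ^N. For t = 1, …, T+1 define Φ_t(w) = ⟨w, Σ_{s<t} g_s⟩ + R(w), and suppose w_t ∈ W is a minimizer of Φ_t over W for every t. Then for every w* ∈ W: Σ_{t=1}^T ⟨g_t, w_{t+1} − w*⟩ ≤ R(w*) − R(w_1) − Σ_{t=1}^T D_R(w_{t+1}, w_t). -/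
open Finset

/-!
By the first-order optimality condition for `w t` on the convex set `W`, the objective `Φ_t`
grows by at least the Bregman divergence `D_R(w (t+1), w t)` when moving from its minimizer
`w t` to `w (t+1)`. Since `Φ_{t+1} = Φ_t + ⟨·, g t⟩`, telescoping these gains from
`Φ_0 (w 0) = R (w 0)` up to `Φ_T (w T) ≤ Φ_T w*` gives the bound.
-/

namespace FTRL

open scoped RealInnerProductSpace

variable {E : Type*} [NormedAddCommGroup E] [InnerProductSpace ℝ E]

def objective (g : ℕ → E) (R : E → ℝ) (t : ℕ) (v : E) : ℝ :=
  ⟪v, ∑ s ∈ range t, g s⟫ + R v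

theorem objective_succ (g : ℕ → E) (R : E → ℝ) (t : ℕ) (v : E) :
    objective g R (t + 1) v = objective g R t v + ⟪g t, v⟫ := by
  simp only [objective, sum_range_succ, inner_add_right, real_inner_comm v (g t)]
  ring

variable [CompleteSpace E]

noncomputable def bregmanDiv (R : E → ℝ) (u v : E) : ℝ :=
  R u - R v - ⟪gradient R v, u - v⟫

theorem inner_add_gradient_sub_nonneg_of_isMinOn {W : Set E} (hW : Convex ℝ W) {R : E → ℝ}
    {G x y : E} (hR : DifferentiableAt ℝ R x) (hx : x ∈ W) (hy : y ∈ W)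
    (hmin : IsMinOn (fun p => ⟪p, G⟫ + R p) W x) :
    0 ≤ ⟪G + gradient R x, y - x⟫ := by
  have hderiv : HasFDerivAt (fun p => ⟪p, G⟫ + R p)
      (innerSL ℝ G + InnerProductSpace.toDual ℝ E (gradient R x)) x := by
    have hlin : HasFDerivAt (fun p => ⟪p, G⟫) (innerSL ℝ G) x := by
      have hfun : (fun p => ⟪p, G⟫) = innerSL ℝ G := funext fun p => real_inner_comm G p
      exact hfun ▸ (innerSL ℝ G).hasFDerivAt
    exact hlin.add (hasGradientAt_iff_hasFDerivAt.mp hR.hasGradientAt)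
  have htangent : y - x ∈ posTangentConeAt W x :=
    sub_mem_posTangentConeAt_of_segment_subset (hW.segment_subset hx hy)
  simpa [inner_add_left] using
    hmin.localize.hasFDerivWithinAt_nonneg hderiv.hasFDerivWithinAt htangent

theorem add_bregmanDiv_le_of_isMinOn {W : Set E} (hW : Convex ℝ W) {R : E → ℝ}
    {G x y : E} (hR : DifferentiableAt ℝ R x) (hx : x ∈ W) (hy : y ∈ W)
    (hmin : IsMinOn (fun p => ⟪p, G⟫ + R p) W x) :
    ⟪x, G⟫ + R x + bregmanDiv R y x ≤ ⟪y, G⟫ + R y := by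
  have hopt := inner_add_gradient_sub_nonneg_of_isMinOn hW hR hx hy hmin
  rw [inner_add_left, inner_sub_right G] at hopt
  rw [real_inner_comm G x, real_inner_comm G y]
  unfold bregmanDiv
  linarith

theorem sum_inner_add_bregmanDiv_le (g : ℕ → E) (R : E → ℝ) (w : ℕ → E) (n : ℕ)
    (hstep : ∀ t < n,
      objective g R t (w t) + bregmanDiv R (w (t + 1)) (w t) ≤ objective g R t (w (t + 1))) :
    ∑ t ∈ range n, (⟪g t, w (t + 1)⟫ + bregmanDiv R (w (t + 1)) (w t)) + R (w 0)
      ≤ objective g R n (w n) := by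
  induction n with
  | zero => simp [objective]
  | succ n ih =>
    have hprev := ih fun t ht => hstep t (Nat.lt_succ_of_lt ht)
    have hlast := hstep n (Nat.lt_succ_self n)
    rw [sum_range_succ, objective_succ]
    linarith

end FTRL

open FTRL RealInnerProductSpace

theorem ftrl_be_the_leader_general {N : ℕ}
    (W : Set (EuclideanSpace ℝ (Fin N))) (hWconv : Convex ℝ W)
    (R : EuclideanSpace ℝ (Fin N) → ℝ)
    (U : Set (EuclideanSpace ℝ (Fin N))) (hWU : W ⊆ U)
    (hRdiff : ∀ x ∈ U, DifferentiableAt ℝ R x)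
    (T : ℕ) (g : ℕ → EuclideanSpace ℝ (Fin N)) (w : ℕ → EuclideanSpace ℝ (Fin N))
    (hwW : ∀ t ≤ T, w t ∈ W)
    (hwmin : ∀ t ≤ T, ∀ q ∈ W,
      (inner ℝ (w t) (∑ s ∈ Finset.range t, g s) : ℝ) + R (w t)
        ≤ (inner ℝ q (∑ s ∈ Finset.range t, g s) : ℝ) + R q)
    (wstar : EuclideanSpace ℝ (Fin N)) (hws : wstar ∈ W) :
    ∑ t ∈ Finset.range T, (inner ℝ (g t) (w (t + 1) - wstar) : ℝ)
      ≤ R wstar - R (w 0)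
        - ∑ t ∈ Finset.range T,
            (R (w (t + 1)) - R (w t)
              - (inner ℝ (gradient R (w t)) (w (t + 1) - w t) : ℝ)) := by
  have hstep : ∀ t < T, objective g R t (w t) + bregmanDiv R (w (t + 1)) (w t)
      ≤ objective g R t (w (t + 1)) := fun t ht =>
    add_bregmanDiv_le_of_isMinOn hWconv (hRdiff _ (hWU (hwW t ht.le))) (hwW t ht.le)
      (hwW (t + 1) ht) (hwmin t ht.le)
  have hleader := sum_inner_add_bregmanDiv_le g R w T hstep
  have hcompare : objective g R T (w T) ≤ objective g R T wstar := hwmin T le_rfl wstar hws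
  have hregret : ∑ t ∈ range T, ⟪g t, w (t + 1) - wstar⟫
      = ∑ t ∈ range T, ⟪g t, w (t + 1)⟫ - ⟪wstar, ∑ t ∈ range T, g t⟫ := by
    simp only [inner_sub_right, sum_sub_distrib, inner_sum, real_inner_comm wstar]
  rw [sum_add_distrib] at hleader
  rw [hregret]
  unfold objective at hcompare hleader
  unfold bregmanDiv at hleader
  linarith

/-- **FTRL "be-the-leader" bound.**
Let `W` be a nonempty convex subset of `ℝ^N`, `R` convex and differentiable on an open set
containing `W`, and `g 0, …, g (T-1)` loss vectors. If `w t` minimizes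
`Φ_t(w) = ⟨w, ∑_{s<t} g s⟩ + R w` over `W` for `t = 0, …, T` (this is the 0-indexed version of
`w_1, …, w_{T+1}`), then for every `w* ∈ W`,
`∑_{t<T} ⟨g t, w (t+1) − w*⟩ ≤ R w* − R (w 0) − ∑_{t<T} D_R(w (t+1), w t)`,
where `D_R(u, v) = R u − R v − ⟨∇R v, u − v⟩`. -/
theorem ftrl_be_the_leader {N : ℕ}
    (W : Set (EuclideanSpace ℝ (Fin N))) (hWne : W.Nonempty) (hWconv : Convex ℝ W)
    (R : EuclideanSpace ℝ (Fin N) → ℝ)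
    (U : Set (EuclideanSpace ℝ (Fin N))) (hUopen : IsOpen U) (hWU : W ⊆ U)
    (hRconv : ConvexOn ℝ U R) (hRdiff : ∀ x ∈ U, DifferentiableAt ℝ R x)
    (T : ℕ) (g : ℕ → EuclideanSpace ℝ (Fin N)) (w : ℕ → EuclideanSpace ℝ (Fin N))
    (hwW : ∀ t ≤ T, w t ∈ W)
    (hwmin : ∀ t ≤ T, ∀ q ∈ W,
      (inner ℝ (w t) (∑ s ∈ Finset.range t, g s) : ℝ) + R (w t)
        ≤ (inner ℝ q (∑ s ∈ Finset.range t, g s) : ℝ) + R q)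
    (wstar : EuclideanSpace ℝ (Fin N)) (hws : wstar ∈ W) :
    ∑ t ∈ Finset.range T, (inner ℝ (g t) (w (t + 1) - wstar) : ℝ)
      ≤ R wstar - R (w 0)
        - ∑ t ∈ Finset.range T,
            (R (w (t + 1)) - R (w t)
              - (inner ℝ (gradient R (w t)) (w (t + 1) - w t) : ℝ)) :=
  ftrl_be_the_leader_general W hWconv R U hWU hRdiff T g w hwW hwmin wstar hws
end

section
/- Let W be a nonempty convex subset of ℝ^N, let R : ℝ^N → ℝ be convex and differentiable on an open set containing W, and let g_1, …, g_T ∈ ℝ^N. For t = 1, …, T+1 define Φ_t(w) = ⟨w, Σ_{s<t} g_s⟩ + R(w), and suppose w_t ∈ W is a minimizer of Φ_t over W for every t. Then for every w* ∈ W: Σ_{t=1}^T ⟨g_t, w_t − w*⟩ ≤ R(w*) − R(w_1) + Σ_{t=1}^T ( ⟨g_t, w_t − w_{t+1}⟩ − D_R(w_{t+1}, w_t) ). -/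
/-!
Write `Φ t q = ⟪q, g 0 + ⋯ + g (t-1)⟫ + R q`. Since `Φ (t+1) = Φ t + ⟪·, g t⟫`, the regret against
`u` telescopes into `R u - R (w 0)`, the one-step gaps `Φ (t+1) (w t) - Φ (t+1) (w (t+1))` and the
final term `Φ T (w T) - Φ T u ≤ 0`. As `w t` minimizes `Φ t` over the convex set `W`, first-order
optimality gives `Φ t (w t) + D_R (w (t+1), w t) ≤ Φ t (w (t+1))`, which bounds each gap by
`⟪g t, w t - w (t+1)⟫ - D_R (w (t+1), w t)`.
-/

open Finset
open scoped RealInnerProductSpace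

variable {E : Type*} [NormedAddCommGroup E] [InnerProductSpace ℝ E]

theorem IsMinOn.fderiv_sub_nonneg {f : E → ℝ} {f' : E →L[ℝ] ℝ} {W : Set E} {x y : E}
    (hmin : IsMinOn f W x) (hW : Convex ℝ W) (hx : x ∈ W) (hy : y ∈ W)
    (hf : HasFDerivAt f f' x) : 0 ≤ f' (y - x) :=
  hmin.localize.hasFDerivWithinAt_nonneg hf.hasFDerivWithinAt
    (sub_mem_posTangentConeAt_of_segment_subset (hW.segment_subset hx hy))

theorem hasFDerivAt_inner_const (θ x : E) : HasFDerivAt (fun q : E => ⟪q, θ⟫) (innerSL ℝ θ) x :=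
  (innerSL ℝ θ).hasFDerivAt.congr_of_eventuallyEq
    (Filter.Eventually.of_forall fun q => real_inner_comm θ q)

section FTRL

variable (R : E → ℝ) (g : ℕ → E)

def ftrlObjective (t : ℕ) (q : E) : ℝ :=
  ⟪q, ∑ s ∈ range t, g s⟫ + R q

theorem ftrlObjective_zero (q : E) : ftrlObjective R g 0 q = R q := by
  simp [ftrlObjective]

theorem ftrlObjective_succ (t : ℕ) (q : E) :
    ftrlObjective R g (t + 1) q = ftrlObjective R g t q + ⟪q, g t⟫ := by
  simp only [ftrlObjective, sum_range_succ, inner_add_right]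
  ring

theorem sum_inner_sub_eq_ftrlObjective (w : ℕ → E) (u : E) (T : ℕ) :
    ∑ t ∈ range T, ⟪g t, w t - u⟫
      = R u - R (w 0)
        + ∑ t ∈ range T, (ftrlObjective R g (t + 1) (w t) - ftrlObjective R g (t + 1) (w (t + 1)))
        + (ftrlObjective R g T (w T) - ftrlObjective R g T u) := by
  induction T with
  | zero => simp [ftrlObjective_zero]
  | succ T ih =>
    rw [sum_range_succ, sum_range_succ, ih, ftrlObjective_succ R g T (w T),
      ftrlObjective_succ R g T u, inner_sub_right, real_inner_comm (g T), real_inner_comm (g T)]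
    ring

end FTRL

variable [CompleteSpace E]

noncomputable def bregmanDiv (R : E → ℝ) (u v : E) : ℝ :=
  R u - R v - ⟪gradient R v, u - v⟫

theorem add_bregmanDiv_le_of_isMinOn {R : E → ℝ} {W : Set E} {θ x y : E}
    (hmin : IsMinOn (fun q => ⟪q, θ⟫ + R q) W x) (hW : Convex ℝ W) (hx : x ∈ W) (hy : y ∈ W)
    (hR : DifferentiableAt ℝ R x) :
    ⟪x, θ⟫ + R x + bregmanDiv R y x ≤ ⟪y, θ⟫ + R y := by
  have hopt := hmin.fderiv_sub_nonneg hW hx hy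
    ((hasFDerivAt_inner_const θ x).add hR.hasGradientAt.hasFDerivAt)
  simp only [add_apply, innerSL_apply_apply,
    InnerProductSpace.toDual_apply_apply, inner_sub_right θ] at hopt
  rw [bregmanDiv]
  linarith [real_inner_comm θ x, real_inner_comm θ y]

theorem ftrlObjective_succ_sub_le {R : E → ℝ} {g : ℕ → E} {W : Set E} {t : ℕ} {x y : E}
    (hmin : IsMinOn (ftrlObjective R g t) W x) (hW : Convex ℝ W) (hx : x ∈ W) (hy : y ∈ W)
    (hR : DifferentiableAt ℝ R x) :
    ftrlObjective R g (t + 1) x - ftrlObjective R g (t + 1) y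
      ≤ ⟪g t, x - y⟫ - bregmanDiv R y x := by
  have := add_bregmanDiv_le_of_isMinOn hmin hW hx hy hR
  simp only [ftrlObjective_succ, inner_sub_right, real_inner_comm (g t)]
  unfold ftrlObjective
  linarith

-- The iterates are 0-indexed: `w t` is the paper's `w_{t+1}`, the minimizer of
-- `ftrlObjective R g t`.
theorem ftrl_first_order_regret_general {N : ℕ}
    (W : Set (EuclideanSpace ℝ (Fin N))) (hWconv : Convex ℝ W)
    (R : EuclideanSpace ℝ (Fin N) → ℝ)
    (U : Set (EuclideanSpace ℝ (Fin N))) (hWU : W ⊆ U)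
    (hRdiff : ∀ x ∈ U, DifferentiableAt ℝ R x)
    (T : ℕ) (g : ℕ → EuclideanSpace ℝ (Fin N)) (w : ℕ → EuclideanSpace ℝ (Fin N))
    (hwW : ∀ t ≤ T, w t ∈ W)
    (hwmin : ∀ t ≤ T, ∀ q ∈ W,
      (inner ℝ (w t) (∑ s ∈ Finset.range t, g s) : ℝ) + R (w t)
        ≤ (inner ℝ q (∑ s ∈ Finset.range t, g s) : ℝ) + R q)
    (wstar : EuclideanSpace ℝ (Fin N)) (hws : wstar ∈ W) :
    ∑ t ∈ Finset.range T, (inner ℝ (g t) (w t - wstar) : ℝ)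
      ≤ R wstar - R (w 0)
        + ∑ t ∈ Finset.range T,
            ((inner ℝ (g t) (w t - w (t + 1)) : ℝ)
              - (R (w (t + 1)) - R (w t)
                  - (inner ℝ (gradient R (w t)) (w (t + 1) - w t) : ℝ))) := by
  have hgaps : ∑ t ∈ range T,
        (ftrlObjective R g (t + 1) (w t) - ftrlObjective R g (t + 1) (w (t + 1)))
      ≤ ∑ t ∈ range T, (⟪g t, w t - w (t + 1)⟫ - bregmanDiv R (w (t + 1)) (w t)) := by
    refine sum_le_sum fun t hmem => ?_
    have ht : t < T := mem_range.1 hmem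
    exact ftrlObjective_succ_sub_le (isMinOn_iff.2 (hwmin t ht.le)) hWconv
      (hwW t ht.le) (hwW (t + 1) ht) (hRdiff _ (hWU (hwW t ht.le)))
  have hlast : ftrlObjective R g T (w T) ≤ ftrlObjective R g T wstar := hwmin T le_rfl wstar hws
  rw [sum_inner_sub_eq_ftrlObjective R g w wstar T]
  unfold bregmanDiv at hgaps
  linarith

/-- **FTRL first-order regret bound.**
With `w t` the FTRL iterates (0-indexed: `w t` is the paper's `w_{t+1}`) for losses `g` with
convex regularizer `R` over a nonempty convex set `W`, for every `w* ∈ W`: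
`∑_{t<T} ⟨g t, w t − w*⟩ ≤ R w* − R (w 0) + ∑_{t<T} (⟨g t, w t − w (t+1)⟩ − D_R(w (t+1), w t))`. -/
theorem ftrl_first_order_regret {N : ℕ}
    (W : Set (EuclideanSpace ℝ (Fin N))) (hWne : W.Nonempty) (hWconv : Convex ℝ W)
    (R : EuclideanSpace ℝ (Fin N) → ℝ)
    (U : Set (EuclideanSpace ℝ (Fin N))) (hUopen : IsOpen U) (hWU : W ⊆ U)
    (hRconv : ConvexOn ℝ U R) (hRdiff : ∀ x ∈ U, DifferentiableAt ℝ R x)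
    (T : ℕ) (g : ℕ → EuclideanSpace ℝ (Fin N)) (w : ℕ → EuclideanSpace ℝ (Fin N))
    (hwW : ∀ t ≤ T, w t ∈ W)
    (hwmin : ∀ t ≤ T, ∀ q ∈ W,
      (inner ℝ (w t) (∑ s ∈ Finset.range t, g s) : ℝ) + R (w t)
        ≤ (inner ℝ q (∑ s ∈ Finset.range t, g s) : ℝ) + R q)
    (wstar : EuclideanSpace ℝ (Fin N)) (hws : wstar ∈ W) :
    ∑ t ∈ Finset.range T, (inner ℝ (g t) (w t - wstar) : ℝ)
      ≤ R wstar - R (w 0)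
        + ∑ t ∈ Finset.range T,
            ((inner ℝ (g t) (w t - w (t + 1)) : ℝ)
              - (R (w (t + 1)) - R (w t)
                  - (inner ℝ (gradient R (w t)) (w (t + 1) - w t) : ℝ))) :=
  ftrl_first_order_regret_general W hWconv R U hWU hRdiff T g w hwW hwmin wstar hws
end

section
/- Let N ≥ 2 be an integer, 0 < ε < 1/N, η > 0 and 0 < ν ≤ 1/16, and let R_{η,ν}(p) = (1/η)·Σ_{i=1}^N p_i log p_i − (1/ν)·Σ_{i=1}^N log p_i. Let c ∈ ℝ^N, let p be a minimizer of p ↦ ⟨p, c⟩ + R_{η,ν}(p) over the truncated simplex Δ_N^ε, let ĉ ∈ ℝ^N satisfy ĉ_i ≤ 0 for every i and ⟨ĉ, p⟩ ≥ −1, and let p⁺ be a minimizer of p' ↦ ⟨p', c + ĉ⟩ + R_{η,ν}(p') over Δ_N^ε. Then p⁺_i ≤ (1/(8ν))·p_i for every i ∈ {1, …, N}. -/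
open Finset

/-- The `ε`-truncated probability simplex in `ℝ^N`. -/
def truncSimplex (N : ℕ) (ε : ℝ) : Set (Fin N → ℝ) :=
  {q | (∀ i, ε ≤ q i) ∧ ∑ i, q i = 1}

/-- The regularizer `R_{η,ν}(p) = (1/η)·∑ i, p i log (p i) − (1/ν)·∑ i, log (p i)`. -/
noncomputable def entLogBarrier (N : ℕ) (η ν : ℝ) (q : Fin N → ℝ) : ℝ :=
  (1 / η) * ∑ i, q i * Real.log (q i) - (1 / ν) * ∑ i, Real.log (q i)

/-!
Adding the first-order optimality conditions of the two minimization problems, and using that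
the gradient of the entropy part is monotone, gives
`∑ i, (p⁺ i - p i)² / (ν p i p⁺ i) ≤ ⟨ĉ, p - p⁺⟩`. As `ĉ ≤ 0` and `⟨ĉ, p⟩ ≥ -1`, the right-hand
side is at most `ρ = maxᵢ p⁺ i / p i`. Keeping only the term of a maximizing coordinate leaves
`(ρ - 1)² ≤ ν ρ²`, so `ρ ≤ 4/3 ≤ 1/(8ν)` when `ν ≤ 1/16`.
-/

open Real Set

theorem IsMinOn.hasLineDerivAt_sub_nonneg {E : Type*} [AddCommGroup E] [Module ℝ E]
    {f : E → ℝ} {s : Set E} {a b : E} {f' : ℝ} (h : IsMinOn f s a) (hab : segment ℝ a b ⊆ s)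
    (hd : HasLineDerivAt ℝ f f' a (b - a)) : 0 ≤ f' := by
  have hmin : IsMinOn (fun t : ℝ => f (a + t • (b - a))) (Icc 0 1) 0 := fun t ht => by
    simpa using h (hab (segment_eq_image' ℝ a b ▸ mem_image_of_mem _ ht))
  simpa using hmin.localize.hasFDerivWithinAt_nonneg hd.hasDerivWithinAt.hasFDerivWithinAt
    (y := 1 - 0) (sub_mem_posTangentConeAt_of_segment_subset (segment_eq_Icc zero_le_one).subset)

theorem convex_truncSimplex (N : ℕ) (ε : ℝ) : Convex ℝ (truncSimplex N ε) := by
  intro x hx y hy a b ha hb hab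
  refine ⟨fun i => ?_, ?_⟩
  · calc ε = a * ε + b * ε := by rw [← add_mul, hab, one_mul]
      _ ≤ a * x i + b * y i := by gcongr <;> [exact hx.1 i; exact hy.1 i]
  · simp [sum_add_distrib, ← mul_sum, hx.2, hy.2, hab]

noncomputable def entLogBarrierDeriv (η ν x : ℝ) : ℝ :=
  (1 / η) * (log x + 1) - (1 / ν) / x

theorem hasLineDerivAt_linear_add_entLogBarrier {N : ℕ} (η ν : ℝ) (d m v : Fin N → ℝ)
    (hm : ∀ i, m i ≠ 0) :
    HasLineDerivAt ℝ (fun q => ∑ i, q i * d i + entLogBarrier N η ν q)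
      (∑ i, (d i + entLogBarrierDeriv η ν (m i)) * v i) m v := by
  have hcoord (i : Fin N) : HasDerivAt
      (fun x => x * d i + (1 / η) * (x * log x) - (1 / ν) * log x)
      (d i + entLogBarrierDeriv η ν (m i)) (m i) := by
    refine (((hasDerivAt_mul_const (d i)).fun_add
      ((hasDerivAt_mul_log (hm i)).const_mul (1 / η))).fun_sub
      ((hasDerivAt_log (hm i)).const_mul (1 / ν))).congr_deriv ?_
    rw [entLogBarrierDeriv]
    ring
  have hline (i : Fin N) : HasDerivAt (fun t : ℝ => m i + t * v i) (v i) 0 := by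
    simpa using ((hasDerivAt_id (0 : ℝ)).mul_const (v i)).const_add (m i)
  have hsum := HasDerivAt.fun_sum (u := univ) fun i _ =>
    (hcoord i).comp_of_eq (0 : ℝ) (hline i) (by simp)
  unfold HasLineDerivAt
  convert hsum using 1
  ext t
  simp only [entLogBarrier, Pi.add_apply, Pi.smul_apply, smul_eq_mul, Function.comp_apply,
    mul_sum, sum_sub_distrib, sum_add_distrib]
  ring

theorem IsMinOn.sum_add_entLogBarrierDeriv_mul_sub_nonneg {N : ℕ} {ε η ν : ℝ} (hε : 0 < ε)
    {d m q : Fin N → ℝ}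
    (hmin : IsMinOn (fun x => ∑ i, x i * d i + entLogBarrier N η ν x) (truncSimplex N ε) m)
    (hm : m ∈ truncSimplex N ε) (hq : q ∈ truncSimplex N ε) :
    0 ≤ ∑ i, (d i + entLogBarrierDeriv η ν (m i)) * (q i - m i) :=
  hmin.hasLineDerivAt_sub_nonneg ((convex_truncSimplex N ε).segment_subset hm hq)
    (hasLineDerivAt_linear_add_entLogBarrier η ν d m (q - m) fun i => (hε.trans_le (hm.1 i)).ne')

/-- The symmetrized Bregman divergence of the log barrier `x ↦ -(1/ν) log x`. -/
noncomputable def logBarrierSymmDiv (ν a b : ℝ) : ℝ :=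
  (1 / ν) * ((b - a) ^ 2 / (a * b))

theorem logBarrierSymmDiv_nonneg {ν a b : ℝ} (hν : 0 ≤ ν) (ha : 0 ≤ a) (hb : 0 ≤ b) :
    0 ≤ logBarrierSymmDiv ν a b := by
  unfold logBarrierSymmDiv
  positivity

theorem log_sub_log_mul_sub_nonneg {x y : ℝ} (hx : 0 < x) (hy : 0 < y) :
    0 ≤ (log x - log y) * (x - y) := by
  rcases le_total x y with hxy | hxy
  · exact mul_nonneg_of_nonpos_of_nonpos (sub_nonpos.2 (log_le_log hx hxy)) (sub_nonpos.2 hxy)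
  · exact mul_nonneg (sub_nonneg.2 (log_le_log hy hxy)) (sub_nonneg.2 hxy)

theorem logBarrierSymmDiv_le_entLogBarrierDeriv_sub_mul_sub {η : ℝ} (ν : ℝ) (hη : 0 ≤ η)
    {a b : ℝ} (ha : 0 < a) (hb : 0 < b) :
    logBarrierSymmDiv ν a b ≤ (entLogBarrierDeriv η ν b - entLogBarrierDeriv η ν a) * (b - a) := by
  have hsplit : (entLogBarrierDeriv η ν b - entLogBarrierDeriv η ν a) * (b - a)
      = (1 / η) * ((log b - log a) * (b - a)) + logBarrierSymmDiv ν a b := by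
    simp only [entLogBarrierDeriv, logBarrierSymmDiv]
    field_simp
    ring
  rw [hsplit, le_add_iff_nonneg_left]
  exact mul_nonneg (by positivity) (log_sub_log_mul_sub_nonneg hb ha)

theorem sum_logBarrierSymmDiv_le_of_isMinOn {N : ℕ} {ε η ν : ℝ} (hε : 0 < ε) (hη : 0 ≤ η)
    {c chat p pplus : Fin N → ℝ} (hp : p ∈ truncSimplex N ε) (hpp : pplus ∈ truncSimplex N ε)
    (hpmin : IsMinOn (fun q => ∑ i, q i * c i + entLogBarrier N η ν q) (truncSimplex N ε) p)
    (hppmin : IsMinOn (fun q => ∑ i, q i * (c i + chat i) + entLogBarrier N η ν q)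
      (truncSimplex N ε) pplus) :
    ∑ i, logBarrierSymmDiv ν (p i) (pplus i) ≤ ∑ i, chat i * (p i - pplus i) := by
  have hfirst := add_nonneg (hpmin.sum_add_entLogBarrierDeriv_mul_sub_nonneg hε hp hpp)
    (hppmin.sum_add_entLogBarrierDeriv_mul_sub_nonneg hε hpp hp)
  rw [← sum_add_distrib] at hfirst
  calc ∑ i, logBarrierSymmDiv ν (p i) (pplus i)
      ≤ ∑ i, (entLogBarrierDeriv η ν (pplus i) - entLogBarrierDeriv η ν (p i)) * (pplus i - p i) :=
        sum_le_sum fun i _ => logBarrierSymmDiv_le_entLogBarrierDeriv_sub_mul_sub ν hη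
          (hε.trans_le (hp.1 i)) (hε.trans_le (hpp.1 i))
    _ ≤ ∑ i, chat i * (p i - pplus i) := by
        rw [← sub_nonneg, ← sum_sub_distrib]
        exact hfirst.trans_eq (sum_congr rfl fun i _ => by ring)

theorem sum_mul_sub_le_of_nonpos {ι : Type*} (s : Finset ι) {c p q : ι → ℝ} {ρ : ℝ}
    (hρ : 0 ≤ ρ) (hc : ∀ i ∈ s, c i ≤ 0) (hp : ∀ i ∈ s, 0 ≤ p i) (hq : ∀ i ∈ s, q i ≤ ρ * p i)
    (hcp : -1 ≤ ∑ i ∈ s, c i * p i) :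
    ∑ i ∈ s, c i * (p i - q i) ≤ ρ := by
  have hcp_nonpos : ∑ i ∈ s, c i * p i ≤ 0 :=
    sum_nonpos fun i hi => mul_nonpos_of_nonpos_of_nonneg (hc i hi) (hp i hi)
  have hcq : ρ * ∑ i ∈ s, c i * p i ≤ ∑ i ∈ s, c i * q i := by
    rw [mul_sum]
    refine sum_le_sum fun i hi => ?_
    rw [mul_left_comm]
    exact mul_le_mul_of_nonpos_left (hq i hi) (hc i hi)
  simp only [mul_sub, sum_sub_distrib]
  nlinarith [mul_nonneg hρ (neg_le_iff_add_nonneg.1 hcp)]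

theorem div_le_four_thirds_of_logBarrierSymmDiv_le {ν a b : ℝ} (hν0 : 0 < ν)
    (hν1 : ν ≤ 1 / 16) (ha : 0 < a) (hb : 0 < b) (h : logBarrierSymmDiv ν a b ≤ b / a) :
    b / a ≤ 4 / 3 := by
  have hsq : (b - a) ^ 2 ≤ ν * b ^ 2 := by
    rw [logBarrierSymmDiv, one_div_mul_eq_div, div_div, div_le_div_iff₀ (by positivity) ha] at h
    nlinarith
  rw [div_le_iff₀ ha]
  nlinarith [sq_nonneg (4 * (b - a) - b)]

theorem log_barrier_iterate_stability_general {N : ℕ}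
    (ε η ν : ℝ) (hε0 : 0 < ε) (hη : 0 < η)
    (hν0 : 0 < ν) (hν1 : ν ≤ 1 / 16)
    (c chat p pplus : Fin N → ℝ)
    (hpmem : p ∈ truncSimplex N ε)
    (hpmin : ∀ q ∈ truncSimplex N ε,
      (∑ i, p i * c i) + entLogBarrier N η ν p ≤ (∑ i, q i * c i) + entLogBarrier N η ν q)
    (hchat : ∀ i, chat i ≤ 0) (hchatp : -1 ≤ ∑ i, chat i * p i)
    (hppmem : pplus ∈ truncSimplex N ε)
    (hppmin : ∀ q ∈ truncSimplex N ε,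
      (∑ i, pplus i * (c i + chat i)) + entLogBarrier N η ν pplus
        ≤ (∑ i, q i * (c i + chat i)) + entLogBarrier N η ν q) :
    ∀ i, pplus i ≤ (1 / (8 * ν)) * p i := by
  intro i
  have hp (k : Fin N) : 0 < p k := hε0.trans_le (hpmem.1 k)
  have hpp (k : Fin N) : 0 < pplus k := hε0.trans_le (hppmem.1 k)
  obtain ⟨j, -, hj⟩ := exists_max_image univ (fun k => pplus k / p k) ⟨i, mem_univ i⟩
  have hratio (k : Fin N) : pplus k ≤ pplus j / p j * p k :=
    (div_le_iff₀ (hp k)).1 (hj k (mem_univ k))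
  have hsymm_j : logBarrierSymmDiv ν (p j) (pplus j) ≤ pplus j / p j :=
    calc logBarrierSymmDiv ν (p j) (pplus j)
        ≤ ∑ k, logBarrierSymmDiv ν (p k) (pplus k) :=
          single_le_sum (f := fun k => logBarrierSymmDiv ν (p k) (pplus k))
            (fun k _ => logBarrierSymmDiv_nonneg hν0.le (hp k).le (hpp k).le) (mem_univ j)
      _ ≤ ∑ k, chat k * (p k - pplus k) :=
          sum_logBarrierSymmDiv_le_of_isMinOn hε0 hη.le hpmem hppmem
            (isMinOn_iff.2 hpmin) (isMinOn_iff.2 hppmin)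
      _ ≤ pplus j / p j :=
          sum_mul_sub_le_of_nonpos univ (div_nonneg (hpp j).le (hp j).le)
            (fun k _ => hchat k) (fun k _ => (hp k).le) (fun k _ => hratio k) hchatp
  have hρ := div_le_four_thirds_of_logBarrierSymmDiv_le hν0 hν1 (hp j) (hpp j) hsymm_j
  have h8ν : 4 / 3 ≤ 1 / (8 * ν) := by
    rw [le_div_iff₀ (by positivity)]
    linarith
  calc pplus i ≤ pplus j / p j * p i := hratio i
    _ ≤ (1 / (8 * ν)) * p i := mul_le_mul_of_nonneg_right (hρ.trans h8ν) (hp i).le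

/-- **Multiplicative stability of log-barrier FTRL iterates.**
If `p` minimizes `⟨·, c⟩ + R_{η,ν}` over `Δ_N^ε`, the increment `ĉ` is componentwise nonpositive
with `⟨ĉ, p⟩ ≥ −1`, and `p⁺` minimizes `⟨·, c + ĉ⟩ + R_{η,ν}` over `Δ_N^ε`, then
`p⁺ i ≤ (1/(8ν)) · p i` for every coordinate `i`. -/
theorem log_barrier_iterate_stability {N : ℕ} (hN : 2 ≤ N)
    (ε η ν : ℝ) (hε0 : 0 < ε) (hε1 : ε < 1 / N) (hη : 0 < η)
    (hν0 : 0 < ν) (hν1 : ν ≤ 1 / 16)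
    (c chat p pplus : Fin N → ℝ)
    (hpmem : p ∈ truncSimplex N ε)
    (hpmin : ∀ q ∈ truncSimplex N ε,
      (∑ i, p i * c i) + entLogBarrier N η ν p ≤ (∑ i, q i * c i) + entLogBarrier N η ν q)
    (hchat : ∀ i, chat i ≤ 0) (hchatp : -1 ≤ ∑ i, chat i * p i)
    (hppmem : pplus ∈ truncSimplex N ε)
    (hppmin : ∀ q ∈ truncSimplex N ε,
      (∑ i, pplus i * (c i + chat i)) + entLogBarrier N η ν pplus
        ≤ (∑ i, q i * (c i + chat i)) + entLogBarrier N η ν q) :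
    ∀ i, pplus i ≤ (1 / (8 * ν)) * p i :=
  log_barrier_iterate_stability_general ε η ν hε0 hη hν0 hν1 c chat p pplus hpmem hpmin hchat hchatp
    hppmem hppmin
end

section
/- Let K ≥ 2 be an integer, and set p = 2/(3K) and q = 2/3 − (K−1)/K². Then the Kullback–Leibler divergence between Bernoulli distributions with parameters p and q satisfies p·log(p/q) + (1−p)·log((1−p)/(1−q)) ≤ log 3. -/
/-- **KL bound for the hidden label.** For an integer `K ≥ 2`, with `p = 2/(3K)` and
`q = 2/3 − (K−1)/K²`, the Bernoulli KL divergence satisfies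
`p·log(p/q) + (1−p)·log((1−p)/(1−q)) ≤ log 3`. -/
theorem kl_hidden_label_le_log_three (K : ℕ) (hK : 2 ≤ K) :
    (2 / (3 * (K : ℝ))) * Real.log ((2 / (3 * (K : ℝ))) / (2 / 3 - ((K : ℝ) - 1) / (K : ℝ) ^ 2))
      + (1 - 2 / (3 * (K : ℝ)))
        * Real.log ((1 - 2 / (3 * (K : ℝ))) / (1 - (2 / 3 - ((K : ℝ) - 1) / (K : ℝ) ^ 2)))
      ≤ Real.log 3 := by
  set x : ℝ := (K : ℝ) with hxdef
  have hx : (2 : ℝ) ≤ x := by rw [hxdef]; exact_mod_cast hK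
  have hx0 : (0 : ℝ) < x := by linarith
  set p : ℝ := 2 / (3 * x) with hpdef
  set q : ℝ := 2 / 3 - (x - 1) / x ^ 2 with hqdef
  have hp0 : 0 < p := by positivity
  have hq0 : 0 < q := by
    rw [hqdef, sub_pos, div_lt_div_iff₀ (by positivity) (by norm_num)]
    nlinarith
  have hp1 : p < 1 := by
    rw [hpdef, div_lt_one (by positivity)]; linarith
  have hq1 : q < 1 := by
    rw [hqdef]
    have h1 : 0 < (x - 1) / x ^ 2 := div_pos (by linarith) (by positivity)
    linarith
  -- p ≤ q
  have hdiff : q - p = (2 * x ^ 2 - 5 * x + 3) / (3 * x ^ 2) := by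
    rw [hpdef, hqdef]; field_simp; ring
  have hpq : p ≤ q := by
    have hnum : 0 ≤ 2 * x ^ 2 - 5 * x + 3 := by nlinarith
    have : 0 ≤ q - p := by rw [hdiff]; exact div_nonneg hnum (by positivity)
    linarith
  clear_value x p q
  -- first term ≤ 0
  have hfirst : p * Real.log (p / q) ≤ 0 := by
    have hlog : Real.log (p / q) ≤ 0 :=
      Real.log_nonpos (by positivity) ((div_le_one hq0).mpr hpq)
    exact mul_nonpos_of_nonneg_of_nonpos hp0.le hlog
  -- second term ≤ log 3
  have hr3 : (1 - p) / (1 - q) ≤ 3 := by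
    rw [div_le_iff₀ (by linarith)]
    have key : 3 * (1 - q) - (1 - p) = 2 / (3 * x) + 3 * ((x - 1) / x ^ 2) := by
      rw [hpdef, hqdef]; ring
    have h1 : (0:ℝ) ≤ 2 / (3 * x) := by positivity
    have h2 : (0:ℝ) ≤ (x - 1) / x ^ 2 := div_nonneg (by linarith) (by positivity)
    linarith
  have hsecond : (1 - p) * Real.log ((1 - p) / (1 - q)) ≤ Real.log 3 := by
    rcases le_or_gt (Real.log ((1 - p) / (1 - q))) 0 with h | h
    · have : (1 - p) * Real.log ((1 - p) / (1 - q)) ≤ 0 :=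
        mul_nonpos_of_nonneg_of_nonpos (by linarith) h
      have h3 : (0 : ℝ) ≤ Real.log 3 := Real.log_nonneg (by norm_num)
      linarith
    · calc (1 - p) * Real.log ((1 - p) / (1 - q))
          ≤ 1 * Real.log ((1 - p) / (1 - q)) := by
            apply mul_le_mul_of_nonneg_right (by linarith) h.le
        _ = Real.log ((1 - p) / (1 - q)) := one_mul _
        _ ≤ Real.log 3 := Real.log_le_log (div_pos (by linarith) (by linarith)) hr3
  linarith
end

section
/- Let K ≥ 2 be an integer, and set p = 2/(3K) and q = 1/K². Then the Kullback–Leibler divergence between Bernoulli distributions with parameters p and q satisfies p·log(p/q) + (1−p)·log((1−p)/(1−q)) ≤ (4/(3K))·log K. -/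
/-- **KL bound for non-hidden nondefault labels.** For an integer `K ≥ 2`, with `p = 2/(3K)` and
`q = 1/K²`, the Bernoulli KL divergence satisfies
`p·log(p/q) + (1−p)·log((1−p)/(1−q)) ≤ (4/(3K))·log K`. -/
theorem kl_other_label_le (K : ℕ) (hK : 2 ≤ K) :
    (2 / (3 * (K : ℝ))) * Real.log ((2 / (3 * (K : ℝ))) / (1 / (K : ℝ) ^ 2))
      + (1 - 2 / (3 * (K : ℝ)))
        * Real.log ((1 - 2 / (3 * (K : ℝ))) / (1 - 1 / (K : ℝ) ^ 2))
      ≤ (4 / (3 * (K : ℝ))) * Real.log K := by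
  have hK2 : (2:ℝ) ≤ (K:ℝ) := by exact_mod_cast hK
  have hKpos : (0:ℝ) < K := by linarith
  have h1 : (2 / (3 * (K : ℝ))) / (1 / (K : ℝ) ^ 2) = 2 * K / 3 := by
    field_simp
  have hlog1 : Real.log ((2 / (3 * (K : ℝ))) / (1 / (K : ℝ) ^ 2)) ≤ Real.log K := by
    rw [h1]
    exact Real.log_le_log (by positivity) (by linarith)
  have hlogK : 0 ≤ Real.log K := Real.log_nonneg (by linarith)
  have hp : (0:ℝ) < 2 / (3 * (K:ℝ)) := by positivity
  have hterm1 : (2 / (3 * (K : ℝ))) * Real.log ((2 / (3 * (K : ℝ))) / (1 / (K : ℝ) ^ 2))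
      ≤ (2 / (3 * (K:ℝ))) * Real.log K :=
    mul_le_mul_of_nonneg_left hlog1 hp.le
  have hple : 2 / (3 * (K:ℝ)) ≤ 1/3 := by
    rw [div_le_div_iff₀ (by positivity) (by norm_num)]; linarith
  have hq : 1 / (K:ℝ)^2 ≤ 1/4 := by
    rw [div_le_div_iff₀ (by positivity) (by norm_num)]; nlinarith
  have hqp : 1/(K:ℝ)^2 ≤ 2/(3*K) := by
    rw [div_le_div_iff₀ (by positivity) (by positivity)]; nlinarith
  have hterm2 : (1 - 2 / (3 * (K : ℝ)))
      * Real.log ((1 - 2 / (3 * (K : ℝ))) / (1 - 1 / (K : ℝ) ^ 2)) ≤ 0 := by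
    apply mul_nonpos_of_nonneg_of_nonpos
    · linarith
    · apply Real.log_nonpos
      · apply div_nonneg <;> linarith
      · rw [div_le_one (by linarith)]; linarith
  have hsplit : (2 / (3 * (K:ℝ))) * Real.log K ≤ (4 / (3 * (K:ℝ))) * Real.log K := by
    apply mul_le_mul_of_nonneg_right _ hlogK
    apply div_le_div_of_nonneg_right (by norm_num) (by positivity)
  linarith
end
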